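/- Let S ⊆ ℝⁿ be measurable, let α : ℝⁿ × ℝⁿ → ℝⁿ be antisymmetric (α(x,y) = -α(y,x) for all x,y), let Θ : ℝⁿ × ℝⁿ → ℝ^{n×n} be a matrix-valued kernel with Θ(x,y) = Θ(y,x) for all x,y, and let u, v : ℝⁿ → ℝ satisfy suitable integrability so that all integrals below converge absolutely on S × S. Then ∫_S v(x) D_S(Θ D*u)(x) dx = ∫_S ∫_S (u(y) − u(x)) (v(y) − v(x)) (α(x,y) · Θ(x,y) α(x,y)) dy dx, where (Θ D*u)(x,y) := Θ(x,y) (D*u)(x,y). -/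
import Mathlib


open MeasureTheory RealInnerProductSpace

/-- Euclidean space `ℝⁿ`. -/
abbrev Euc (n : ℕ) := EuclideanSpace ℝ (Fin n)

/-- The nonlocal divergence over `S`: `D_S(f)(x) := ∫_S (f(x,y) + f(y,x)) · α(x,y) dy`. -/
noncomputable def nldivS {n : ℕ} (S : Set (Euc n)) (a f : Euc n → Euc n → Euc n)
    (x : Euc n) : ℝ :=
  ∫ y in S, ⟪f x y + f y x, a x y⟫

/-- The nonlocal gradient adjoint: `(D*u)(x,y) := -(u(y) - u(x)) α(x,y)`. -/
noncomputable def nlgrad {n : ℕ} (a : Euc n → Euc n → Euc n) (u : Euc n → ℝ)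
    (x y : Euc n) : Euc n :=
  -(u y - u x) • a x y

/-- The weighted bilinear-form identity: for a symmetric matrix-valued kernel `Θ`
(realized as a linear map on `ℝⁿ` for each pair `(x,y)`),
`∫_S v D_S(Θ D*u) dx = ∫_S ∫_S (u(y) − u(x))(v(y) − v(x)) (α · Θ α) dy dx`. -/
theorem nldivS_theta_bilinear_form {n : ℕ}
    (S : Set (Euc n)) (hS : MeasurableSet S)
    (a : Euc n → Euc n → Euc n)
    (ha : ∀ x y, a x y = - a y x)
    (Θ : Euc n → Euc n → (Euc n →ₗ[ℝ] Euc n))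
    (hΘ : ∀ x y, Θ x y = Θ y x)
    (u v : Euc n → ℝ)
    (h1 : IntegrableOn
      (fun p : Euc n × Euc n => v p.1 * ⟪Θ p.1 p.2 (nlgrad a u p.1 p.2), a p.1 p.2⟫)
      (S ×ˢ S))
    (h2 : IntegrableOn
      (fun p : Euc n × Euc n => v p.1 * ⟪Θ p.2 p.1 (nlgrad a u p.2 p.1), a p.1 p.2⟫)
      (S ×ˢ S))
    (h3 : IntegrableOn
      (fun p : Euc n × Euc n =>
        (u p.2 - u p.1) * (v p.2 - v p.1) * ⟪a p.1 p.2, Θ p.1 p.2 (a p.1 p.2)⟫)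
      (S ×ˢ S)) :
    (∫ x in S, v x * nldivS S a (fun x y => Θ x y (nlgrad a u x y)) x) =
      ∫ x in S, ∫ y in S,
        (u y - u x) * (v y - v x) * ⟪a x y, Θ x y (a x y)⟫ := by
  have hP : (volume : Measure (Euc n × Euc n)).restrict (S ×ˢ S)
      = (volume.restrict S).prod (volume.restrict S) := by
    rw [Measure.volume_eq_prod, Measure.prod_restrict]
  rw [IntegrableOn, hP] at h1 h2 h3
  set μ : Measure (Euc n) := volume.restrict S with hμ
  have key : (∫ x in S, v x * nldivS S a (fun x y => Θ x y (nlgrad a u x y)) x)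
      = ∫ p : Euc n × Euc n,
          (v p.1 * ⟪Θ p.1 p.2 (nlgrad a u p.1 p.2), a p.1 p.2⟫
            + v p.1 * ⟪Θ p.2 p.1 (nlgrad a u p.2 p.1), a p.1 p.2⟫) ∂(μ.prod μ) := by
    have hI : Integrable (fun p : Euc n × Euc n =>
        v p.1 * ⟪Θ p.1 p.2 (nlgrad a u p.1 p.2), a p.1 p.2⟫
          + v p.1 * ⟪Θ p.2 p.1 (nlgrad a u p.2 p.1), a p.1 p.2⟫) (μ.prod μ) := h1.add h2
    rw [integral_prod _ hI]
    refine integral_congr_ae (Filter.Eventually.of_forall fun x => ?_)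
    simp only [nldivS]
    rw [← integral_const_mul]
    exact integral_congr_ae (Filter.Eventually.of_forall fun y => by
      simp only [inner_add_left, mul_add])
  have h2' : Integrable
      (fun p : Euc n × Euc n => v p.2 * ⟪Θ p.1 p.2 (nlgrad a u p.1 p.2), a p.1 p.2⟫)
      (μ.prod μ) := by
    refine h2.swap.neg.congr (Filter.Eventually.of_forall fun p => ?_)
    simp only [Function.comp_apply, Pi.neg_apply, Prod.fst_swap, Prod.snd_swap]
    rw [ha p.2 p.1, inner_neg_right, mul_neg, neg_neg]
  have hswap : (∫ p : Euc n × Euc n,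
        v p.1 * ⟪Θ p.2 p.1 (nlgrad a u p.2 p.1), a p.1 p.2⟫ ∂(μ.prod μ))
      = - ∫ p : Euc n × Euc n,
        v p.2 * ⟪Θ p.1 p.2 (nlgrad a u p.1 p.2), a p.1 p.2⟫ ∂(μ.prod μ) := by
    rw [← integral_prod_swap, ← integral_neg]
    refine integral_congr_ae (Filter.Eventually.of_forall fun p => ?_)
    simp only [Prod.fst_swap, Prod.snd_swap]
    rw [ha p.2 p.1, inner_neg_right, mul_neg]
  have hR : (∫ x in S, ∫ y in S,
        (u y - u x) * (v y - v x) * ⟪a x y, Θ x y (a x y)⟫)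
      = ∫ p : Euc n × Euc n,
          (u p.2 - u p.1) * (v p.2 - v p.1) * ⟪a p.1 p.2, Θ p.1 p.2 (a p.1 p.2)⟫
          ∂(μ.prod μ) := (integral_prod _ h3).symm
  rw [key, integral_add h1 h2, hswap, ← sub_eq_add_neg, ← integral_sub h1 h2', hR]
  refine integral_congr_ae (Filter.Eventually.of_forall fun p => ?_)
  simp only [nlgrad, neg_smul, map_neg, LinearMap.map_smul, inner_neg_left, real_inner_smul_left,
    real_inner_comm (Θ p.1 p.2 (a p.1 p.2)) (a p.1 p.2)]
  ring
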